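/- Let m ≥ 2, n ≥ 1 and let Δ ⊂ ℝ^{m+n} be the root system of osp(2m|2n). Define the three subsets: P(m) := L(m) ∪ N⁺(m) with L(m) := {ε_i − ε_j : i ≠ j} ∪ {δ_k − δ_l : k ≠ l} ∪ {±(ε_i − δ_k) : all i, k} and N⁺(m) := {ε_i + ε_j : i ≠ j} ∪ {δ_k + δ_l : k ≠ l} ∪ {2δ_k : all k} ∪ {ε_i + δ_k : all i, k}; P(1) := L(1) ∪ N⁺(1) with L(1) := {±ε_i ± ε_j : 2 ≤ i < j ≤ m} ∪ {±δ_k ± δ_l : k ≠ l} ∪ {±2δ_k : all k} ∪ {±ε_i ± δ_k : i ≥ 2} and N⁺(1) := {ε₁ ± ε_j : j ≥ 2} ∪ {ε₁ ± δ_k : all k}; and P̄(m) := θ(P(m)), where θ is the linear map sending ε_m ↦ −ε_m and fixing all other basis vectors. Then a subset P ⊆ Δ is a cominuscule parabolic set of roots of Δ if and only if w(P) ∈ {P(m), P(1), P̄(m)} for some w ∈ W; each of P(m), P(1), P̄(m) is itself a cominuscule parabolic set of roots, and no two of them lie in the same W-orbit. -/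

import Mathlib

open Pointwise

/-- A proper subset `P` of a symmetric root set `Δ` is a parabolic set of roots if
`Δ = P ∪ (-P)` and `P` is closed under sums lying in `Δ`. -/
def IsParabolic {V : Type*} [AddCommGroup V] (Δ P : Set V) : Prop :=
  P ⊂ Δ ∧ Δ = P ∪ (-P) ∧ ∀ α ∈ P, ∀ β ∈ P, α + β ∈ Δ → α + β ∈ P

/-- A parabolic set of roots is cominuscule if the sum of any two elements of its
nilradical `N⁺ = P \ (-P)` is not a root. -/
def IsCominuscule {V : Type*} [AddCommGroup V] (Δ P : Set V) : Prop :=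
  IsParabolic Δ P ∧ ∀ α ∈ P \ (-P), ∀ β ∈ P \ (-P), α + β ∉ Δ

namespace OspEven

variable {m n : ℕ}

/-- `ℝ^{m+n}`, with coordinates indexed by `Fin m ⊕ Fin n`. -/
abbrev V (m n : ℕ) := (Fin m ⊕ Fin n) → ℝ

noncomputable def ε (i : Fin m) : V m n := Pi.single (Sum.inl i) 1

noncomputable def δ (k : Fin n) : V m n := Pi.single (Sum.inr k) 1

/-- The root system of `osp(2m|2n)`. -/
noncomputable def Δroot (m n : ℕ) : Set (V m n) :=
  {v | ∃ i j : Fin m, i ≠ j ∧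
      (v = ε i + ε j ∨ v = ε i - ε j ∨ v = -ε i + ε j ∨ v = -ε i - ε j)} ∪
  {v | ∃ k l : Fin n, k ≠ l ∧
      (v = δ k + δ l ∨ v = δ k - δ l ∨ v = -δ k + δ l ∨ v = -δ k - δ l)} ∪
  {v | ∃ k : Fin n, v = (2 : ℝ) • δ k ∨ v = -((2 : ℝ) • δ k)} ∪
  {v | ∃ (i : Fin m) (k : Fin n),
      v = ε i + δ k ∨ v = ε i - δ k ∨ v = -ε i + δ k ∨ v = -ε i - δ k}

/-- `P(m) = L(m) ⊔ N⁺(m)`. -/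
noncomputable def Pm (m n : ℕ) : Set (V m n) :=
  -- L(m)
  ({v | ∃ i j : Fin m, i ≠ j ∧ v = ε i - ε j} ∪
   {v | ∃ k l : Fin n, k ≠ l ∧ v = δ k - δ l} ∪
   {v | ∃ (i : Fin m) (k : Fin n), v = ε i - δ k ∨ v = δ k - ε i}) ∪
  -- N⁺(m)
  ({v | ∃ i j : Fin m, i ≠ j ∧ v = ε i + ε j} ∪
   {v | ∃ k l : Fin n, k ≠ l ∧ v = δ k + δ l} ∪
   {v | ∃ k : Fin n, v = (2 : ℝ) • δ k} ∪
   {v | ∃ (i : Fin m) (k : Fin n), v = ε i + δ k})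

/-- `P(1) = L(1) ⊔ N⁺(1)` (1-based `2 ≤ i < j` becomes 0-based `1 ≤ i`, `i < j`;
`ε₁` is the basis vector with 0-based index `0`). -/
noncomputable def P1 (m n : ℕ) : Set (V m n) :=
  -- L(1)
  ({v | ∃ i j : Fin m, 1 ≤ (i : ℕ) ∧ i < j ∧
      (v = ε i + ε j ∨ v = ε i - ε j ∨ v = -ε i + ε j ∨ v = -ε i - ε j)} ∪
   {v | ∃ k l : Fin n, k ≠ l ∧
      (v = δ k + δ l ∨ v = δ k - δ l ∨ v = -δ k + δ l ∨ v = -δ k - δ l)} ∪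
   {v | ∃ k : Fin n, v = (2 : ℝ) • δ k ∨ v = -((2 : ℝ) • δ k)} ∪
   {v | ∃ (i : Fin m) (k : Fin n), 1 ≤ (i : ℕ) ∧
      (v = ε i + δ k ∨ v = ε i - δ k ∨ v = -ε i + δ k ∨ v = -ε i - δ k)}) ∪
  -- N⁺(1)
  ({v | ∃ i j : Fin m, (i : ℕ) = 0 ∧ 1 ≤ (j : ℕ) ∧ (v = ε i + ε j ∨ v = ε i - ε j)} ∪
   {v | ∃ (i : Fin m) (k : Fin n), (i : ℕ) = 0 ∧ (v = ε i + δ k ∨ v = ε i - δ k)})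

/-- The linear map `θ` sending `ε_m ↦ -ε_m` and fixing all other basis vectors. -/
def θmap (m n : ℕ) : V m n → V m n :=
  fun v => Sum.elim (fun i : Fin m => if (i : ℕ) = m - 1 then -(v (Sum.inl i)) else v (Sum.inl i))
    (fun k : Fin n => v (Sum.inr k))

/-- `P̄(m) = θ(P(m))`. -/
noncomputable def Pmbar (m n : ℕ) : Set (V m n) := θmap m n '' Pm m n

/-- The action of an element of the Weyl group `W` of `so(2m) × sp(2n)`;
`σ, τ` are the permutations and `s, t` the (±1) signs (with `∏ s = 1`). -/
def act (σ : Equiv.Perm (Fin m)) (τ : Equiv.Perm (Fin n))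
    (s : Fin m → ℝ) (t : Fin n → ℝ) : V m n → V m n :=
  fun v => Sum.elim (fun i => s i * v (Sum.inl (σ.symm i)))
    (fun k => t k * v (Sum.inr (τ.symm k)))

/-- Membership of a transformation in the Weyl group of `so(2m) × sp(2n)`:
signs are `±1` and the number of minus signs among the `ε`'s is even. -/
def InW (σ : Equiv.Perm (Fin m)) (τ : Equiv.Perm (Fin n))
    (s : Fin m → ℝ) (t : Fin n → ℝ) : Prop :=
  (∀ i, s i = 1 ∨ s i = -1) ∧ (∀ k, t k = 1 ∨ t k = -1) ∧ (∏ i, s i = 1)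

end OspEven

/-!
For a cominuscule parabolic `P`, the grading (`1` on `N⁺`, `0` on `L`, `-1` on `-N⁺`) is additive
on `Δ`: on a zero-sum triple of roots, closedness and the cominuscule condition allow only the
value patterns `(1, -1, 0)` and `(0, 0, 0)` up to order and sign. For this `Δ` such a function is
the restriction of a linear form, so `P = {α ∈ Δ | 0 ≤ ⟨w, α⟩}` with `⟨w, ·⟩ ∈ {0, ±2}` on `Δ`;
testing on `2δ_k`, `ε_i ± δ_k`, `δ_l ± δ_k` and `ε_i ± ε_j` shows that either all coordinates of
`w` are `±1` or `w = ±2ε_i`. Signed permutations with evenly many `ε`-sign changes move `w` to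
`(1, …, 1)`, to its `θ`-image (when the `ε`-signs of `w` have product `-1`), or to `2ε_1`: these
give `P(m)`, `P̄(m)` and `P(1)`. Conversely `{⟨w, ·⟩ ≥ 0}` is cominuscule whenever `⟨w, ·⟩` takes
values in `{0, ±a}` on `Δ`, as `N⁺` is where it equals `a`. The orbits differ because `P`
determines the signs of `⟨w, ·⟩` on `Δ`: they vanish on `δ_k` only for `P(1)`, and for
`±1`-vectors they determine `w`, whose product of `ε`-signs is `W`-invariant.
-/

section RootSubsets

variable {V : Type*} [AddCommGroup V] {Δ P : Set V}

open Classical in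
noncomputable def grading (P : Set V) (v : V) : ℝ :=
  (if v ∈ P then 1 else 0) - (if -v ∈ P then 1 else 0)

lemma grading_neg (P : Set V) (v : V) : grading P (-v) = -grading P v := by
  simp only [grading]
  rw [neg_neg]
  ring

namespace IsParabolic

lemma neg_mem_of_mem (hP : IsParabolic Δ P) {v : V} (hv : v ∈ Δ) : -v ∈ Δ := by
  rw [hP.2.1, Set.mem_union, Set.mem_neg, neg_neg] at *
  exact hv.symm

lemma mem_or_neg_mem (hP : IsParabolic Δ P) {v : V} (hv : v ∈ Δ) : v ∈ P ∨ -v ∈ P := by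
  rwa [hP.2.1, Set.mem_union, Set.mem_neg] at hv

lemma eq_setOf_grading_nonneg (hP : IsParabolic Δ P) :
    P = {v ∈ Δ | 0 ≤ grading P v} := by
  ext v
  refine ⟨fun hv => ⟨hP.1.subset hv, ?_⟩, fun ⟨hvΔ, hv⟩ => ?_⟩
  · rw [grading, if_pos hv]
    split_ifs <;> norm_num
  · by_contra hvP
    rw [grading, if_neg hvP, if_pos ((hP.mem_or_neg_mem hvΔ).resolve_left hvP)] at hv
    norm_num at hv

end IsParabolic

lemma grading_eq_one_iff {v : V} : grading P v = 1 ↔ v ∈ P ∧ -v ∉ P := by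
  simp only [grading]
  split_ifs <;> norm_num [*]

lemma grading_mem (P : Set V) (v : V) :
    grading P v = -1 ∨ grading P v = 0 ∨ grading P v = 1 := by
  simp only [grading]
  split_ifs <;> norm_num

lemma IsParabolic.grading_nonneg_iff (hP : IsParabolic Δ P) {v : V} (hv : v ∈ Δ) :
    0 ≤ grading P v ↔ v ∈ P := by
  conv_rhs => rw [hP.eq_setOf_grading_nonneg]
  exact ⟨fun h => ⟨hv, h⟩, And.right⟩

lemma IsCominuscule.grading_add (hP : IsCominuscule Δ P) {α β : V} (hα : α ∈ Δ) (hβ : β ∈ Δ)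
    (hαβ : α + β ∈ Δ) : grading P (α + β) = grading P α + grading P β := by
  have hneg := fun v (hv : v ∈ Δ) => hP.1.neg_mem_of_mem hv
  have key : ∀ x y z, x ∈ Δ → y ∈ Δ → x + y = z → z ∈ Δ →
      (0 ≤ grading P x → 0 ≤ grading P y → 0 ≤ grading P z) ∧
      (grading P x = 1 → grading P y = 1 → False) := by
    rintro x y z hx hy rfl hxy
    simp only [hP.1.grading_nonneg_iff hx, hP.1.grading_nonneg_iff hy,
      hP.1.grading_nonneg_iff hxy, grading_eq_one_iff]
    exact ⟨fun hx' hy' => hP.1.2.2 x hx' y hy' hxy,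
      fun hx' hy' => hP.2 x hx' y hy' hxy⟩
  -- `key` for the three pairs of the zero-sum triple `α, β, -(α + β)` and for their negatives
  have k1 := key α β _ hα hβ rfl hαβ
  have k2 := key (-α) (-β) _ (hneg _ hα) (hneg _ hβ) (neg_add α β).symm (hneg _ hαβ)
  have k3 := key (α + β) (-β) α hαβ (hneg _ hβ) (by abel) hα
  have k4 := key (-(α + β)) β (-α) (hneg _ hαβ) hβ (by abel) (hneg _ hα)
  have k5 := key (α + β) (-α) β hαβ (hneg _ hα) (by abel) hβ
  have k6 := key (-(α + β)) α (-β) (hneg _ hαβ) hα (by abel) (hneg _ hβ)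
  simp only [grading_neg] at k2 k3 k4 k5 k6
  rcases grading_mem P α with h1 | h1 | h1 <;> rcases grading_mem P β with h2 | h2 | h2 <;>
    rcases grading_mem P (α + β) with h3 | h3 | h3 <;>
    simp only [h1, h2, h3] at * <;> norm_num at *

lemma isCominuscule_setOf_nonneg (hΔ : ∀ v ∈ Δ, -v ∈ Δ) (φ : V →+ ℝ) {a : ℝ}
    (hφ : ∀ v ∈ Δ, φ v = 0 ∨ φ v = a ∨ φ v = -a) (hne : ∃ v ∈ Δ, φ v ≠ 0) :
    IsCominuscule Δ {v ∈ Δ | 0 ≤ φ v} := by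
  have hN : ∀ v ∈ {v ∈ Δ | 0 ≤ φ v} \ -{v ∈ Δ | 0 ≤ φ v}, 0 < φ v := by
    rintro v ⟨⟨hv, -⟩, hv'⟩
    rw [Set.mem_neg, Set.mem_sep_iff, map_neg, neg_nonneg, not_and, not_le] at hv'
    exact hv' (hΔ v hv)
  refine ⟨⟨⟨fun v hv => hv.1, fun hsub => ?_⟩, ?_, ?_⟩, ?_⟩
  · obtain ⟨v, hv, hv0⟩ := hne
    have h1 := (hsub hv).2
    have h2 := (hsub (hΔ v hv)).2
    rw [map_neg] at h2
    exact hv0 (by linarith)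
  · ext v
    simp only [Set.mem_union, Set.mem_neg, Set.mem_sep_iff, map_neg, neg_nonneg]
    refine ⟨fun hv => (le_total 0 (φ v)).imp (⟨hv, ·⟩) (⟨hΔ v hv, ·⟩), ?_⟩
    rintro (⟨hv, -⟩ | ⟨hv, -⟩)
    exacts [hv, by simpa using hΔ _ hv]
  · rintro α ⟨-, hα⟩ β ⟨-, hβ⟩ hαβ
    exact ⟨hαβ, by rw [map_add]; linarith⟩
  · intro α hα β hβ hαβ
    have h1 := hN α hα
    have h2 := hN β hβ
    have h3 := map_add φ α β
    rcases hφ α hα.1.1 with h | h | h <;> rcases hφ β hβ.1.1 with h' | h' | h' <;>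
      rcases hφ _ hαβ with h'' | h'' | h'' <;> linarith

lemma IsCominuscule.preimage {Q : Set V} (hQ : IsCominuscule Δ Q) (f : V →+ V)
    (hf : Function.Surjective f) (hfΔ : ∀ v, f v ∈ Δ ↔ v ∈ Δ) :
    IsCominuscule Δ (f ⁻¹' Q) := by
  obtain ⟨⟨hQΔ, hΔQ, hadd⟩, hN⟩ := hQ
  have hmem : ∀ v, v ∈ Δ ↔ v ∈ f ⁻¹' Q ∪ -(f ⁻¹' Q) := by
    intro v
    rw [← hfΔ, hΔQ]
    simp [map_neg]
  refine ⟨⟨⟨fun v hv => (hfΔ v).1 (hQΔ.subset hv), fun hsub => ?_⟩, Set.ext hmem, ?_⟩, ?_⟩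
  · obtain ⟨x, hxΔ, hxQ⟩ := Set.exists_of_ssubset hQΔ
    obtain ⟨y, rfl⟩ := hf x
    exact hxQ (hsub ((hfΔ y).1 hxΔ))
  · intro α hα β hβ hαβ
    simpa [map_add] using hadd _ hα _ hβ (by rw [← map_add, hfΔ]; exact hαβ)
  · rintro α ⟨hα, hα'⟩ β ⟨hβ, hβ'⟩ hαβ
    refine hN (f α) ⟨hα, by simpa [map_neg] using hα'⟩ (f β) ⟨hβ, by simpa using hβ'⟩ ?_
    rwa [← map_add, hfΔ]

lemma isCominuscule_image_iff (e : V ≃+ V) (he : ∀ v, e v ∈ Δ ↔ v ∈ Δ) :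
    IsCominuscule Δ (e '' P) ↔ IsCominuscule Δ P := by
  refine ⟨fun h => ?_, fun h => ?_⟩
  · simpa [Set.preimage_image_eq _ e.injective] using
      h.preimage e.toAddMonoidHom e.surjective he
  · rw [show e '' P = e.symm ⁻¹' P from e.toEquiv.image_eq_preimage_symm P]
    exact h.preimage e.symm.toAddMonoidHom e.symm.surjective fun v => by
      simpa using (he (e.symm v)).symm

end RootSubsets

section SignedSums

variable {M : Type*} [AddCommGroup M] [Module ℝ M]

lemma exists_signs_of_eq_add_or_sub {v x y : M} (h : v = x + y ∨ v = x - y ∨ v = -x + y ∨ v = -x - y) :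
    ∃ a b : ℝ, |a| = 1 ∧ |b| = 1 ∧ v = a • x + b • y := by
  rcases h with rfl | rfl | rfl | rfl
  exacts [⟨1, 1, by norm_num⟩, ⟨1, -1, by norm_num [sub_eq_add_neg]⟩, ⟨-1, 1, by norm_num⟩,
    ⟨-1, -1, by norm_num [sub_eq_add_neg]⟩]

lemma smul_add_eq_add_or_sub (x y : M) {b : ℝ} (hb : |b| = 1) :
    x + b • y = x + y ∨ x + b • y = x - y := by
  rcases eq_or_eq_neg_of_abs_eq hb with rfl | rfl <;> simp [sub_eq_add_neg]

lemma smul_add_smul_eq_add_or_sub (x y : M) {a b : ℝ} (ha : |a| = 1) (hb : |b| = 1) :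
    a • x + b • y = x + y ∨ a • x + b • y = x - y ∨
      a • x + b • y = -x + y ∨ a • x + b • y = -x - y := by
  rcases eq_or_eq_neg_of_abs_eq ha with rfl | rfl <;>
    rcases eq_or_eq_neg_of_abs_eq hb with rfl | rfl <;> simp [sub_eq_add_neg]

lemma smul_eq_two_smul_or (x : M) {a : ℝ} (ha : |a| = 2) :
    a • x = (2 : ℝ) • x ∨ a • x = -((2 : ℝ) • x) := by
  rcases eq_or_eq_neg_of_abs_eq ha with rfl | rfl <;> simp [neg_smul]

lemma apply_smul_add_smul_of_neg {p : M → Prop} (hneg : ∀ v, p v → p (-v)) {x y : M}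
    (hadd : p (x + y)) (hsub : p (x - y)) {a b : ℝ} (ha : |a| = 1) (hb : |b| = 1) :
    p (a • x + b • y) := by
  rcases eq_or_eq_neg_of_abs_eq ha with rfl | rfl <;>
    rcases eq_or_eq_neg_of_abs_eq hb with rfl | rfl
  · simpa using hadd
  · simpa [sub_eq_add_neg] using hsub
  · convert hneg _ hsub using 1; module
  · convert hneg _ hadd using 1; module

end SignedSums

lemma mul_self_eq_one_of_abs_eq_one {a : ℝ} (ha : |a| = 1) : a * a = 1 := by
  rw [← abs_mul_abs_self, ha, one_mul]

lemma eq_one_of_abs_eq_one_of_nonneg {a : ℝ} (ha : |a| = 1) (h : 0 ≤ a) : a = 1 :=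
  (abs_of_nonneg h).symm.trans ha

lemma eq_of_abs_eq_one_of_neg_one_lt_mul {x y : ℝ} (hx : |x| = 1) (hy : |y| = 1)
    (h : -1 < x * y) : x = y := by
  rcases eq_or_eq_neg_of_abs_eq hx with rfl | rfl <;>
    rcases eq_or_eq_neg_of_abs_eq hy with rfl | rfl <;> first | rfl | norm_num at h

lemma abs_eq_one_of_add_of_sub {x y : ℝ} (h₁ : x + y = 0 ∨ x + y = 2 ∨ x + y = -2)
    (h₂ : x - y = 0 ∨ x - y = 2 ∨ x - y = -2) (hy : |y| = 1) : |x| = 1 := by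
  rw [abs_eq zero_le_one]
  rcases eq_or_eq_neg_of_abs_eq hy with rfl | rfl <;> rcases h₁ with h₁ | h₁ | h₁ <;>
    rcases h₂ with h₂ | h₂ | h₂ <;>
    first | (exfalso; linarith) | (left; linarith) | (right; linarith)

lemma eq_zero_of_add_of_sub {x y : ℝ} (h₁ : x + y = 0 ∨ x + y = 2 ∨ x + y = -2)
    (h₂ : x - y = 0 ∨ x - y = 2 ∨ x - y = -2) (hx : x = 0 ∨ x = 2 ∨ x = -2)
    (hy : y = 2 ∨ y = -2) : x = 0 := by
  rcases hx with hx | hx | hx <;> rcases hy with rfl | rfl <;> rcases h₁ with h₁ | h₁ | h₁ <;>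
    rcases h₂ with h₂ | h₂ | h₂ <;> linarith

namespace OspEven

variable {m n : ℕ}

@[simp] lemma dotProduct_ε (w : V m n) (i : Fin m) : w ⬝ᵥ ε i = w (Sum.inl i) := by
  simp [ε]

@[simp] lemma dotProduct_δ (w : V m n) (k : Fin n) : w ⬝ᵥ δ k = w (Sum.inr k) := by
  simp [δ]

lemma smul_ε_add_smul_ε_mem {i j : Fin m} (hij : i ≠ j) {a b : ℝ} (ha : |a| = 1)
    (hb : |b| = 1) : a • ε i + b • ε j ∈ Δroot m n :=
  Or.inl (Or.inl (Or.inl ⟨i, j, hij, smul_add_smul_eq_add_or_sub _ _ ha hb⟩))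

lemma smul_δ_add_smul_δ_mem {k l : Fin n} (hkl : k ≠ l) {a b : ℝ} (ha : |a| = 1)
    (hb : |b| = 1) : a • δ k + b • δ l ∈ Δroot m n :=
  Or.inl (Or.inl (Or.inr ⟨k, l, hkl, smul_add_smul_eq_add_or_sub _ _ ha hb⟩))

lemma smul_δ_mem (k : Fin n) {a : ℝ} (ha : |a| = 2) : a • δ k ∈ Δroot m n :=
  Or.inl (Or.inr ⟨k, smul_eq_two_smul_or _ ha⟩)

lemma smul_ε_add_smul_δ_mem (i : Fin m) (k : Fin n) {a b : ℝ} (ha : |a| = 1)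
    (hb : |b| = 1) : a • ε i + b • δ k ∈ Δroot m n :=
  Or.inr ⟨i, k, smul_add_smul_eq_add_or_sub _ _ ha hb⟩

lemma ε_add_ε_mem {i j : Fin m} (hij : i ≠ j) : ε i + ε j ∈ Δroot m n :=
  Or.inl (Or.inl (Or.inl ⟨i, j, hij, Or.inl rfl⟩))

lemma ε_sub_ε_mem {i j : Fin m} (hij : i ≠ j) : ε i - ε j ∈ Δroot m n :=
  Or.inl (Or.inl (Or.inl ⟨i, j, hij, Or.inr (Or.inl rfl)⟩))

lemma δ_add_δ_mem {k l : Fin n} (hkl : k ≠ l) : δ k + δ l ∈ Δroot m n :=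
  Or.inl (Or.inl (Or.inr ⟨k, l, hkl, Or.inl rfl⟩))

lemma δ_sub_δ_mem {k l : Fin n} (hkl : k ≠ l) : δ k - δ l ∈ Δroot m n :=
  Or.inl (Or.inl (Or.inr ⟨k, l, hkl, Or.inr (Or.inl rfl)⟩))

lemma two_smul_δ_mem (k : Fin n) : (2 : ℝ) • δ k ∈ Δroot m n :=
  Or.inl (Or.inr ⟨k, Or.inl rfl⟩)

lemma ε_add_δ_mem (i : Fin m) (k : Fin n) : ε i + δ k ∈ Δroot m n :=
  Or.inr ⟨i, k, Or.inl rfl⟩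

lemma ε_sub_δ_mem (i : Fin m) (k : Fin n) : ε i - δ k ∈ Δroot m n :=
  Or.inr ⟨i, k, Or.inr (Or.inl rfl)⟩

theorem Δroot_induction {p : V m n → Prop}
    (ee : ∀ i j, i ≠ j → ∀ a b : ℝ, |a| = 1 → |b| = 1 → p (a • ε i + b • ε j))
    (dd : ∀ k l, k ≠ l → ∀ a b : ℝ, |a| = 1 → |b| = 1 → p (a • δ k + b • δ l))
    (d2 : ∀ k (a : ℝ), |a| = 2 → p (a • δ k))
    (ed : ∀ i k (a b : ℝ), |a| = 1 → |b| = 1 → p (a • ε i + b • δ k)) :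
    ∀ v ∈ Δroot m n, p v := by
  rintro v (((⟨i, j, hij, hv⟩ | ⟨k, l, hkl, hv⟩) | ⟨k, hv⟩) | ⟨i, k, hv⟩)
  · obtain ⟨a, b, ha, hb, rfl⟩ := exists_signs_of_eq_add_or_sub hv
    exact ee i j hij a b ha hb
  · obtain ⟨a, b, ha, hb, rfl⟩ := exists_signs_of_eq_add_or_sub hv
    exact dd k l hkl a b ha hb
  · rcases hv with rfl | rfl
    · exact d2 k 2 (by norm_num)
    · simpa [neg_smul] using d2 k (-2) (by norm_num)
  · obtain ⟨a, b, ha, hb, rfl⟩ := exists_signs_of_eq_add_or_sub hv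
    exact ed i k a b ha hb

theorem Δroot_induction_of_neg {p : V m n → Prop} (hneg : ∀ v, p v → p (-v))
    (ee : ∀ i j, i ≠ j → p (ε i + ε j) ∧ p (ε i - ε j))
    (dd : ∀ k l, k ≠ l → p (δ k + δ l) ∧ p (δ k - δ l))
    (d2 : ∀ k, p ((2 : ℝ) • δ k))
    (ed : ∀ i k, p (ε i + δ k) ∧ p (ε i - δ k)) :
    ∀ v ∈ Δroot m n, p v := by
  refine Δroot_induction
    (fun i j hij _ _ ha hb => apply_smul_add_smul_of_neg hneg (ee i j hij).1 (ee i j hij).2 ha hb)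
    (fun k l hkl _ _ ha hb => apply_smul_add_smul_of_neg hneg (dd k l hkl).1 (dd k l hkl).2 ha hb)
    (fun k a ha => ?_)
    (fun i k _ _ ha hb => apply_smul_add_smul_of_neg hneg (ed i k).1 (ed i k).2 ha hb)
  rcases eq_or_eq_neg_of_abs_eq ha with rfl | rfl
  · exact d2 k
  · simpa [neg_smul] using hneg _ (d2 k)

lemma neg_mem_Δroot {v : V m n} (hv : v ∈ Δroot m n) : -v ∈ Δroot m n := by
  refine Δroot_induction (p := fun v => -v ∈ Δroot m n) ?_ ?_ ?_ ?_ v hv <;> intros <;>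
    simp only [neg_add, ← neg_smul]
  · apply smul_ε_add_smul_ε_mem <;> simp_all
  · apply smul_δ_add_smul_δ_mem <;> simp_all
  · apply smul_δ_mem; simp_all
  · apply smul_ε_add_smul_δ_mem <;> simp_all

def nonnegRoots (w : V m n) : Set (V m n) := {v ∈ Δroot m n | 0 ≤ w ⬝ᵥ v}

lemma nonnegRoots_smul {r : ℝ} (hr : 0 < r) (w : V m n) :
    nonnegRoots (r • w) = nonnegRoots w := by
  ext v
  simp [nonnegRoots, smul_dotProduct, mul_nonneg_iff_of_pos_left hr]

def actₗ (σ : Equiv.Perm (Fin m)) (τ : Equiv.Perm (Fin n)) (s : Fin m → ℝ) (t : Fin n → ℝ) :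
    V m n →ₗ[ℝ] V m n where
  toFun := act σ τ s t
  map_add' u v := by ext (i | k) <;> simp [act, mul_add]
  map_smul' r v := by ext (i | k) <;> simp [act, mul_left_comm]

section SignedPermutation

variable {σ : Equiv.Perm (Fin m)} {τ : Equiv.Perm (Fin n)} {s : Fin m → ℝ} {t : Fin n → ℝ}

lemma actₗ_apply (v : V m n) : actₗ σ τ s t v = act σ τ s t v := rfl

lemma actₗ_ε (i : Fin m) : actₗ σ τ s t (ε i) = s (σ i) • ε (σ i) := by
  ext (j | k)
  · by_cases h : j = σ i <;> simp [actₗ_apply, act, ε, Pi.single_apply, Equiv.symm_apply_eq, h]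
  · simp [actₗ_apply, act, ε]

lemma actₗ_δ (k : Fin n) : actₗ σ τ s t (δ k) = t (τ k) • δ (τ k) := by
  ext (i | l)
  · simp [actₗ_apply, act, δ]
  · by_cases h : l = τ k <;> simp [actₗ_apply, act, δ, Pi.single_apply, Equiv.symm_apply_eq, h]

lemma actₗ_actₗ_symm (hs : ∀ i, |s i| = 1) (ht : ∀ k, |t k| = 1) (v : V m n) :
    actₗ σ τ s t (actₗ σ.symm τ.symm (s ∘ σ) (t ∘ τ) v) = v := by
  ext (i | k) <;> simp [actₗ_apply, act, ← mul_assoc, mul_self_eq_one_of_abs_eq_one, hs, ht]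

lemma actₗ_symm_actₗ (hs : ∀ i, |s i| = 1) (ht : ∀ k, |t k| = 1) (v : V m n) :
    actₗ σ.symm τ.symm (s ∘ σ) (t ∘ τ) (actₗ σ τ s t v) = v := by
  ext (i | k) <;> simp [actₗ_apply, act, ← mul_assoc, mul_self_eq_one_of_abs_eq_one, hs, ht]

lemma actₗ_mem (hs : ∀ i, |s i| = 1) (ht : ∀ k, |t k| = 1) {v : V m n}
    (hv : v ∈ Δroot m n) : actₗ σ τ s t v ∈ Δroot m n := by
  refine Δroot_induction (p := fun v => actₗ σ τ s t v ∈ Δroot m n) ?_ ?_ ?_ ?_ v hv <;> intros <;>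
    simp only [map_add, map_smul, actₗ_ε, actₗ_δ, smul_smul]
  · apply smul_ε_add_smul_ε_mem <;> simp_all [abs_mul]
  · apply smul_δ_add_smul_δ_mem <;> simp_all [abs_mul]
  · apply smul_δ_mem; simp_all [abs_mul]
  · apply smul_ε_add_smul_δ_mem <;> simp_all [abs_mul]

lemma actₗ_mem_iff (hs : ∀ i, |s i| = 1) (ht : ∀ k, |t k| = 1) {v : V m n} :
    actₗ σ τ s t v ∈ Δroot m n ↔ v ∈ Δroot m n := by
  refine ⟨fun h => ?_, actₗ_mem hs ht⟩
  rw [← actₗ_symm_actₗ hs ht v]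
  exact actₗ_mem (fun i => hs (σ i)) (fun k => ht (τ k)) h

lemma dotProduct_actₗ_actₗ (hs : ∀ i, |s i| = 1) (ht : ∀ k, |t k| = 1) (x y : V m n) :
    actₗ σ τ s t x ⬝ᵥ actₗ σ τ s t y = x ⬝ᵥ y := by
  simp only [dotProduct, Fintype.sum_sum_type, actₗ_apply, act, Sum.elim_inl, Sum.elim_inr]
  congr 1
  · simp only [mul_mul_mul_comm _ (x _), mul_self_eq_one_of_abs_eq_one (hs _), one_mul]
    exact σ.symm.sum_comp fun i => x (Sum.inl i) * y (Sum.inl i)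
  · simp only [mul_mul_mul_comm _ (x _), mul_self_eq_one_of_abs_eq_one (ht _), one_mul]
    exact τ.symm.sum_comp fun k => x (Sum.inr k) * y (Sum.inr k)

def weylEquiv (hs : ∀ i, |s i| = 1) (ht : ∀ k, |t k| = 1) : V m n ≃ₗ[ℝ] V m n :=
  { actₗ σ τ s t with
    invFun := actₗ σ.symm τ.symm (s ∘ σ) (t ∘ τ)
    left_inv := actₗ_symm_actₗ hs ht
    right_inv := actₗ_actₗ_symm hs ht }

lemma InW.abs_left (h : InW σ τ s t) (i : Fin m) : |s i| = 1 :=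
  (abs_eq zero_le_one).2 (h.1 i)

lemma InW.abs_right (h : InW σ τ s t) (k : Fin n) : |t k| = 1 :=
  (abs_eq zero_le_one).2 (h.2.1 k)

lemma isCominuscule_image_act_iff (hs : ∀ i, |s i| = 1) (ht : ∀ k, |t k| = 1)
    {P : Set (V m n)} :
    IsCominuscule (Δroot m n) (act σ τ s t '' P) ↔ IsCominuscule (Δroot m n) P :=
  isCominuscule_image_iff (weylEquiv hs ht).toAddEquiv fun _ => actₗ_mem_iff hs ht

lemma image_act_nonnegRoots (hs : ∀ i, |s i| = 1) (ht : ∀ k, |t k| = 1) (w : V m n) :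
    act σ τ s t '' nonnegRoots w = nonnegRoots (act σ τ s t w) := by
  change actₗ σ τ s t '' _ = nonnegRoots (actₗ σ τ s t w)
  ext u
  constructor
  · rintro ⟨v, ⟨hv, hwv⟩, rfl⟩
    exact ⟨actₗ_mem hs ht hv, by rwa [dotProduct_actₗ_actₗ hs ht]⟩
  · rintro ⟨hu, hwu⟩
    refine ⟨_, ⟨?_, ?_⟩, actₗ_actₗ_symm hs ht u⟩
    · rwa [← actₗ_mem_iff hs ht, actₗ_actₗ_symm hs ht]
    · rwa [← dotProduct_actₗ_actₗ hs ht, actₗ_actₗ_symm hs ht]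

end SignedPermutation

lemma Pm_subset_nonnegRoots : Pm m n ⊆ nonnegRoots 1 := by
  rintro v (((⟨i, j, hij, rfl⟩ | ⟨k, l, hkl, rfl⟩) | ⟨i, k, rfl | rfl⟩) |
    (((⟨i, j, hij, rfl⟩ | ⟨k, l, hkl, rfl⟩) | ⟨k, rfl⟩) | ⟨i, k, rfl⟩))
  exacts [⟨ε_sub_ε_mem hij, by simp⟩, ⟨δ_sub_δ_mem hkl, by simp⟩,
    ⟨ε_sub_δ_mem i k, by simp⟩, ⟨by simpa using neg_mem_Δroot (ε_sub_δ_mem i k), by simp⟩,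
    ⟨ε_add_ε_mem hij, by simp⟩, ⟨δ_add_δ_mem hkl, by simp⟩, ⟨two_smul_δ_mem k, by simp⟩,
    ⟨ε_add_δ_mem i k, by simp⟩]

lemma nonnegRoots_one_subset_Pm : nonnegRoots 1 ⊆ Pm m n := by
  rintro v ⟨hv, hval⟩
  revert hval
  refine Δroot_induction (p := fun v => 0 ≤ (1 : V m n) ⬝ᵥ v → v ∈ Pm m n) ?_ ?_ ?_ ?_ v hv
  · intro i j hij a b ha hb hval
    rcases eq_or_eq_neg_of_abs_eq ha with rfl | rfl <;>
      rcases eq_or_eq_neg_of_abs_eq hb with rfl | rfl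
    · exact Or.inr (Or.inl (Or.inl (Or.inl ⟨i, j, hij, by simp⟩)))
    · exact Or.inl (Or.inl (Or.inl ⟨i, j, hij, by simp [sub_eq_add_neg]⟩))
    · exact Or.inl (Or.inl (Or.inl ⟨j, i, hij.symm, by simp [neg_add_eq_sub]⟩))
    · norm_num at hval
  · intro k l hkl a b ha hb hval
    rcases eq_or_eq_neg_of_abs_eq ha with rfl | rfl <;>
      rcases eq_or_eq_neg_of_abs_eq hb with rfl | rfl
    · exact Or.inr (Or.inl (Or.inl (Or.inr ⟨k, l, hkl, by simp⟩)))
    · exact Or.inl (Or.inl (Or.inr ⟨k, l, hkl, by simp [sub_eq_add_neg]⟩))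
    · exact Or.inl (Or.inl (Or.inr ⟨l, k, hkl.symm, by simp [neg_add_eq_sub]⟩))
    · norm_num at hval
  · intro k a ha hval
    rcases eq_or_eq_neg_of_abs_eq ha with rfl | rfl
    · exact Or.inr (Or.inl (Or.inr ⟨k, rfl⟩))
    · norm_num at hval
  · intro i k a b ha hb hval
    rcases eq_or_eq_neg_of_abs_eq ha with rfl | rfl <;>
      rcases eq_or_eq_neg_of_abs_eq hb with rfl | rfl
    · exact Or.inr (Or.inr ⟨i, k, by simp⟩)
    · exact Or.inl (Or.inr ⟨i, k, Or.inl (by simp [sub_eq_add_neg])⟩)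
    · exact Or.inl (Or.inr ⟨i, k, Or.inr (by simp [neg_add_eq_sub])⟩)
    · norm_num at hval

lemma Pm_eq : Pm m n = nonnegRoots 1 :=
  Pm_subset_nonnegRoots.antisymm nonnegRoots_one_subset_Pm

lemma P1_subset_nonnegRoots (hm : 0 < m) : P1 m n ⊆ nonnegRoots (ε ⟨0, hm⟩) := by
  rintro v ((((⟨i, j, hi, hij, hv⟩ | ⟨k, l, hkl, hv⟩) | ⟨k, hv⟩) | ⟨i, k, hi, hv⟩) |
    (⟨i, j, hi, hj, hv⟩ | ⟨i, k, hi, hv⟩))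
  · obtain ⟨a, b, ha, hb, rfl⟩ := exists_signs_of_eq_add_or_sub hv
    have hi0 : i ≠ ⟨0, hm⟩ := by rintro rfl; simp at hi
    have hj0 : j ≠ ⟨0, hm⟩ := by rintro rfl; simp [Fin.lt_def] at hij
    exact ⟨smul_ε_add_smul_ε_mem hij.ne ha hb, by simp [ε, hi0, hj0]⟩
  · obtain ⟨a, b, ha, hb, rfl⟩ := exists_signs_of_eq_add_or_sub hv
    exact ⟨smul_δ_add_smul_δ_mem hkl ha hb, by simp [ε, δ]⟩
  · exact ⟨Or.inl (Or.inr ⟨k, hv⟩), by rcases hv with rfl | rfl <;> simp [ε, δ]⟩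
  · obtain ⟨a, b, ha, hb, rfl⟩ := exists_signs_of_eq_add_or_sub hv
    have hi0 : i ≠ ⟨0, hm⟩ := by rintro rfl; simp at hi
    exact ⟨smul_ε_add_smul_δ_mem i k ha hb, by simp [ε, δ, hi0]⟩
  · obtain rfl : i = ⟨0, hm⟩ := Fin.ext hi
    have hj0 : j ≠ ⟨0, hm⟩ := by rintro rfl; simp at hj
    rcases hv with rfl | rfl
    · exact ⟨ε_add_ε_mem hj0.symm, by simp [ε, hj0]⟩
    · exact ⟨ε_sub_ε_mem hj0.symm, by simp [ε, hj0]⟩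
  · obtain rfl : i = ⟨0, hm⟩ := Fin.ext hi
    rcases hv with rfl | rfl
    · exact ⟨ε_add_δ_mem _ k, by simp [ε, δ]⟩
    · exact ⟨ε_sub_δ_mem _ k, by simp [ε, δ]⟩

lemma nonnegRoots_ε_subset_P1 (hm : 0 < m) : nonnegRoots (ε ⟨0, hm⟩) ⊆ P1 m n := by
  have one_le {i : Fin m} (hi : i ≠ ⟨0, hm⟩) : 1 ≤ (i : ℕ) :=
    Nat.one_le_iff_ne_zero.2 fun h => hi (Fin.ext h)
  rintro v ⟨hv, hval⟩
  revert hval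
  refine Δroot_induction (p := fun v => 0 ≤ ε ⟨0, hm⟩ ⬝ᵥ v → v ∈ P1 m n) ?_ ?_ ?_ ?_ v hv
  · intro i j hij a b ha hb hval
    by_cases hi : i = ⟨0, hm⟩
    · subst hi
      have hj : j ≠ ⟨0, hm⟩ := hij.symm
      simp [ε, hj] at hval
      obtain rfl := eq_one_of_abs_eq_one_of_nonneg ha hval
      exact Or.inr (Or.inl ⟨_, j, rfl, one_le hj, by simpa using smul_add_eq_add_or_sub _ _ hb⟩)
    by_cases hj : j = ⟨0, hm⟩
    · subst hj
      simp [ε, hi] at hval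
      obtain rfl := eq_one_of_abs_eq_one_of_nonneg hb hval
      exact Or.inr (Or.inl ⟨_, i, rfl, one_le hi, by
        simpa [add_comm] using smul_add_eq_add_or_sub (ε _) (ε i) ha⟩)
    rcases lt_or_gt_of_ne hij with hlt | hlt
    · exact Or.inl (Or.inl (Or.inl (Or.inl
        ⟨i, j, one_le hi, hlt, smul_add_smul_eq_add_or_sub _ _ ha hb⟩)))
    · exact Or.inl (Or.inl (Or.inl (Or.inl
        ⟨j, i, one_le hj, hlt, add_comm (a • ε i) _ ▸ smul_add_smul_eq_add_or_sub _ _ hb ha⟩)))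
  · exact fun k l hkl a b ha hb _ => Or.inl (Or.inl (Or.inl (Or.inr
      ⟨k, l, hkl, smul_add_smul_eq_add_or_sub _ _ ha hb⟩)))
  · exact fun k a ha _ => Or.inl (Or.inl (Or.inr ⟨k, smul_eq_two_smul_or _ ha⟩))
  · intro i k a b ha hb hval
    by_cases hi : i = ⟨0, hm⟩
    · subst hi
      simp [ε, δ] at hval
      obtain rfl := eq_one_of_abs_eq_one_of_nonneg ha hval
      exact Or.inr (Or.inr ⟨_, k, rfl, by simpa using smul_add_eq_add_or_sub _ _ hb⟩)
    · exact Or.inl (Or.inr ⟨i, k, one_le hi, smul_add_smul_eq_add_or_sub _ _ ha hb⟩)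

lemma P1_eq (hm : 0 < m) : P1 m n = nonnegRoots (ε ⟨0, hm⟩) :=
  (P1_subset_nonnegRoots hm).antisymm (nonnegRoots_ε_subset_P1 hm)

def θsign (m : ℕ) (i : Fin m) : ℝ := if (i : ℕ) = m - 1 then -1 else 1

lemma abs_θsign (i : Fin m) : |θsign m i| = 1 := by
  unfold θsign; split_ifs <;> simp

lemma prod_θsign (hm : 0 < m) : ∏ i, θsign m i = -1 := by
  have h : ∀ i : Fin m, θsign m i = if i = ⟨m - 1, by omega⟩ then -1 else 1 := fun i => by
    simp [θsign, Fin.ext_iff]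
  simp [h]

lemma θmap_eq : θmap m n = act 1 1 (θsign m) 1 := by
  funext v
  ext (i | k) <;> simp [θmap, act, θsign, Equiv.Perm.one_def]

lemma Pmbar_eq : Pmbar m n = act 1 1 (θsign m) 1 '' Pm m n := by
  rw [Pmbar, θmap_eq]

lemma isCominuscule_nonnegRoots {w : V m n} {a : ℝ}
    (hw : ∀ v ∈ Δroot m n, w ⬝ᵥ v = 0 ∨ w ⬝ᵥ v = a ∨ w ⬝ᵥ v = -a)
    (hne : ∃ v ∈ Δroot m n, w ⬝ᵥ v ≠ 0) : IsCominuscule (Δroot m n) (nonnegRoots w) :=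
  isCominuscule_setOf_nonneg (fun _ => neg_mem_Δroot) (AddMonoidHom.mk' (w ⬝ᵥ ·) (dotProduct_add w))
    hw hne

lemma isCominuscule_Pm (k₀ : Fin n) : IsCominuscule (Δroot m n) (Pm m n) := by
  rw [Pm_eq]
  refine isCominuscule_nonnegRoots (a := 2) (Δroot_induction_of_neg ?_ ?_ ?_ ?_ ?_)
    ⟨_, two_smul_δ_mem k₀, by simp⟩
  · intro v hv
    rw [dotProduct_neg]
    rcases hv with h | h | h <;> simp [h]
  all_goals intros; norm_num

lemma isCominuscule_P1 (hm : 0 < m) (k₀ : Fin n) : IsCominuscule (Δroot m n) (P1 m n) := by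
  rw [P1_eq hm]
  refine isCominuscule_nonnegRoots (a := 1) (Δroot_induction_of_neg ?_ ?_ ?_ ?_ ?_)
    ⟨_, ε_add_δ_mem ⟨0, hm⟩ k₀, by simp [ε, δ]⟩
  · intro v hv
    rw [dotProduct_neg]
    rcases hv with h | h | h <;> simp [h]
  · intro i j hij
    by_cases hi : i = ⟨0, hm⟩ <;> by_cases hj : j = ⟨0, hm⟩ <;> simp_all [ε]
  · intros; simp [ε, δ]
  · intros; simp [ε, δ]
  · intro i k
    by_cases hi : i = ⟨0, hm⟩ <;> simp_all [ε, δ]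

lemma isCominuscule_Pmbar (k₀ : Fin n) : IsCominuscule (Δroot m n) (Pmbar m n) := by
  rw [Pmbar_eq, isCominuscule_image_act_iff (t := 1) abs_θsign fun _ => abs_one]
  exact isCominuscule_Pm k₀

theorem exists_dotProduct_eq_of_additive (k₀ : Fin n) (φ : V m n → ℝ)
    (hneg : ∀ v, φ (-v) = -φ v)
    (hadd : ∀ α ∈ Δroot m n, ∀ β ∈ Δroot m n, α + β ∈ Δroot m n → φ (α + β) = φ α + φ β) :
    ∃ w : V m n, ∀ v ∈ Δroot m n, φ v = w ⬝ᵥ v := by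
  let d : Fin n → ℝ := fun k => φ ((2 : ℝ) • δ k) / 2
  let c : Fin m → ℝ := fun i => φ (ε i + δ k₀) - d k₀
  have hrel : ∀ α β γ, α ∈ Δroot m n → β ∈ Δroot m n → α + β = γ → γ ∈ Δroot m n →
      φ γ = φ α + φ β := by
    rintro α β γ hα hβ rfl hγ
    exact hadd α hα β hβ hγ
  have h2δ : ∀ k, φ ((2 : ℝ) • δ k) = 2 * d k := fun k => by simp only [d]; ring
  have hδδ : ∀ k l, k ≠ l → φ (δ k + δ l) = d k + d l ∧ φ (δ k - δ l) = d k - d l := by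
    intro k l hkl
    have e₁ := hrel _ _ (δ k + δ l) (two_smul_δ_mem k) (δ_sub_δ_mem hkl.symm) (by module)
      (δ_add_δ_mem hkl)
    have e₂ := hrel _ _ ((2 : ℝ) • δ l) (δ_add_δ_mem hkl) (δ_sub_δ_mem hkl.symm) (by module)
      (two_smul_δ_mem l)
    have e₃ : φ (δ k - δ l) = -φ (δ l - δ k) := by rw [← hneg, neg_sub]
    constructor <;> linarith [h2δ k, h2δ l]
  have hεδ : ∀ i k, φ (ε i + δ k) = c i + d k ∧ φ (ε i - δ k) = c i - d k := by
    intro i k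
    have hplus : φ (ε i + δ k) = c i + d k := by
      by_cases hk : k = k₀
      · subst hk
        simp only [c]
        ring
      · have e := hrel _ _ (ε i + δ k) (ε_add_δ_mem i k₀) (δ_sub_δ_mem hk) (by abel)
          (ε_add_δ_mem i k)
        linarith [(hδδ k k₀ hk).2]
    have e := hrel _ _ (ε i + δ k) (ε_sub_δ_mem i k) (two_smul_δ_mem k) (by module)
      (ε_add_δ_mem i k)
    exact ⟨hplus, by linarith [h2δ k]⟩
  have hεε : ∀ i j, i ≠ j → φ (ε i + ε j) = c i + c j ∧ φ (ε i - ε j) = c i - c j := by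
    intro i j hij
    have e₁ := hrel _ _ (ε i + ε j) (ε_add_δ_mem i k₀) (ε_sub_δ_mem j k₀) (by abel)
      (ε_add_ε_mem hij)
    have e₂ := hrel _ _ (ε i - ε j) (ε_add_δ_mem i k₀) (neg_mem_Δroot (ε_add_δ_mem j k₀))
      (by abel) (ε_sub_ε_mem hij)
    rw [hneg] at e₂
    constructor <;> linarith [hεδ i k₀, hεδ j k₀]
  refine ⟨Sum.elim c d, Δroot_induction_of_neg (fun v hv => by rw [hneg, hv, dotProduct_neg])
    (fun i j hij => ?_) (fun k l hkl => ?_) (fun k => ?_) (fun i k => ?_)⟩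
  · simp [hεε i j hij]
  · simp [hδδ k l hkl]
  · simp [h2δ]
  · simp [hεδ i k]

lemma abs_eq_one_of_apply_inr_ne_zero {w : V m n}
    (hw : ∀ v ∈ Δroot m n, w ⬝ᵥ v = 0 ∨ w ⬝ᵥ v = 2 ∨ w ⬝ᵥ v = -2) {k : Fin n}
    (hk : w (Sum.inr k) ≠ 0) : ∀ p, |w p| = 1 := by
  have hw' : ∀ v ∈ Δroot m n, ∀ x, w ⬝ᵥ v = x → x = 0 ∨ x = 2 ∨ x = -2 := by
    rintro v hv x rfl
    exact hw v hv
  have hk1 : |w (Sum.inr k)| = 1 := by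
    rw [abs_eq zero_le_one]
    rcases hw' _ (two_smul_δ_mem k) (2 * w (Sum.inr k)) (by simp) with h | h | h
    · exact absurd (by linarith) hk
    · left; linarith
    · right; linarith
  rintro (i | l)
  · exact abs_eq_one_of_add_of_sub (hw' _ (ε_add_δ_mem i k) _ (by simp))
      (hw' _ (ε_sub_δ_mem i k) _ (by simp)) hk1
  · by_cases hl : l = k
    · rwa [hl]
    · exact abs_eq_one_of_add_of_sub (hw' _ (δ_add_δ_mem hl) _ (by simp))
        (hw' _ (δ_sub_δ_mem hl) _ (by simp)) hk1

lemma eq_smul_ε_or_eq_zero_of_apply_inr_eq_zero (k₀ : Fin n) {w : V m n}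
    (hw : ∀ v ∈ Δroot m n, w ⬝ᵥ v = 0 ∨ w ⬝ᵥ v = 2 ∨ w ⬝ᵥ v = -2)
    (hd : ∀ k, w (Sum.inr k) = 0) : (∃ (i : Fin m) (a : ℝ), |a| = 2 ∧ w = a • ε i) ∨ w = 0 := by
  have hw' : ∀ v ∈ Δroot m n, ∀ x, w ⬝ᵥ v = x → x = 0 ∨ x = 2 ∨ x = -2 := by
    rintro v hv x rfl
    exact hw v hv
  have hε : ∀ i, w (Sum.inl i) = 0 ∨ w (Sum.inl i) = 2 ∨ w (Sum.inl i) = -2 := fun i =>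
    hw' _ (ε_add_δ_mem i k₀) _ (by simp [hd])
  by_cases hc : ∃ i, w (Sum.inl i) ≠ 0
  · obtain ⟨i, hi⟩ := hc
    have hi2 : w (Sum.inl i) = 2 ∨ w (Sum.inl i) = -2 := (hε i).resolve_left hi
    refine Or.inl ⟨i, w (Sum.inl i), by rcases hi2 with h | h <;> simp [h], ?_⟩
    ext (j | k)
    · by_cases hj : j = i
      · simp [hj, ε]
      · simp only [ε, Pi.smul_apply, ne_eq, Sum.inl.injEq, hj, not_false_eq_true,
          Pi.single_eq_of_ne, smul_zero]
        exact eq_zero_of_add_of_sub (hw' _ (ε_add_ε_mem hj) _ (by simp))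
          (hw' _ (ε_sub_ε_mem hj) _ (by simp)) (hε j) hi2
    · simp [ε, hd]
  · push Not at hc
    right
    ext (i | k) <;> simp [hc, hd]

lemma abs_eq_one_or_eq_smul_ε_or_eq_zero (k₀ : Fin n) {w : V m n}
    (hw : ∀ v ∈ Δroot m n, w ⬝ᵥ v = 0 ∨ w ⬝ᵥ v = 2 ∨ w ⬝ᵥ v = -2) :
    (∀ p, |w p| = 1) ∨ (∃ (i : Fin m) (a : ℝ), |a| = 2 ∧ w = a • ε i) ∨ w = 0 := by
  by_cases hd : ∃ k, w (Sum.inr k) ≠ 0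
  · obtain ⟨k, hk⟩ := hd
    exact Or.inl (abs_eq_one_of_apply_inr_ne_zero hw hk)
  · push Not at hd
    exact Or.inr (eq_smul_ε_or_eq_zero_of_apply_inr_eq_zero k₀ hw hd)

theorem exists_eq_nonnegRoots_of_isCominuscule (k₀ : Fin n) {P : Set (V m n)}
    (hP : IsCominuscule (Δroot m n) P) :
    ∃ w : V m n, w ≠ 0 ∧ (∀ v ∈ Δroot m n, w ⬝ᵥ v = 0 ∨ w ⬝ᵥ v = 2 ∨ w ⬝ᵥ v = -2) ∧
      P = nonnegRoots w := by
  obtain ⟨w, hw⟩ := exists_dotProduct_eq_of_additive k₀ (fun v => 2 * grading P v)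
    (fun v => by rw [grading_neg, mul_neg])
    (fun α hα β hβ hαβ => by rw [hP.grading_add hα hβ hαβ, mul_add])
  have hPw : P = nonnegRoots w := by
    conv_lhs => rw [hP.1.eq_setOf_grading_nonneg]
    ext v
    refine and_congr_right fun hv => ?_
    rw [← hw v hv]
    constructor <;> intro h <;> linarith
  refine ⟨w, ?_, fun v hv => ?_, hPw⟩
  · rintro rfl
    obtain ⟨v, hv, hvP⟩ := Set.exists_of_ssubset hP.1.1
    exact hvP (hPw ▸ ⟨hv, by simp⟩)
  · rw [← hw v hv]
    rcases grading_mem P v with h | h | h <;> norm_num [h]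

lemma exists_InW_image_eq_Pm_or_Pmbar (hm : 0 < m) {w : V m n} (hw : ∀ p, |w p| = 1) :
    ∃ σ τ s t, InW σ τ s t ∧
      (act σ τ s t '' nonnegRoots w = Pm m n ∨ act σ τ s t '' nonnegRoots w = Pmbar m n) := by
  have hprod : |∏ i, w (Sum.inl i)| = 1 := by simp [Finset.abs_prod, hw]
  rcases eq_or_eq_neg_of_abs_eq hprod with h | h
  · refine ⟨1, 1, w ∘ Sum.inl, w ∘ Sum.inr, ⟨fun i => eq_or_eq_neg_of_abs_eq (hw _),
      fun k => eq_or_eq_neg_of_abs_eq (hw _), h⟩, Or.inl ?_⟩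
    rw [image_act_nonnegRoots (s := w ∘ Sum.inl) (t := w ∘ Sum.inr) (fun i => hw _)
      (fun k => hw _), Pm_eq]
    congr 1
    ext (i | k) <;> simp [act, Equiv.Perm.one_def, mul_self_eq_one_of_abs_eq_one (hw _)]
  · have hs : ∀ i, |w (Sum.inl i) * θsign m i| = 1 := fun i => by
      rw [abs_mul, hw, abs_θsign, one_mul]
    refine ⟨1, 1, fun i => w (Sum.inl i) * θsign m i, w ∘ Sum.inr,
      ⟨fun i => eq_or_eq_neg_of_abs_eq (hs i), fun k => eq_or_eq_neg_of_abs_eq (hw _), ?_⟩,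
      Or.inr ?_⟩
    · rw [Finset.prod_mul_distrib, h, prod_θsign hm]
      norm_num
    rw [image_act_nonnegRoots (t := w ∘ Sum.inr) hs (fun k => hw _), Pmbar_eq, Pm_eq,
      image_act_nonnegRoots (t := 1) abs_θsign fun _ => abs_one]
    congr 1
    ext (i | k) <;> simp [act, Equiv.Perm.one_def, mul_right_comm _ (θsign m _),
      mul_self_eq_one_of_abs_eq_one (hw _)]

lemma exists_InW_image_eq_P1 (hm : 2 ≤ m) (i₀ : Fin m) {a : ℝ} (ha : |a| = 2) :
    ∃ σ τ s t, InW σ τ s t ∧ act σ τ s t '' nonnegRoots (a • ε i₀) = P1 m n := by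
  let z₀ : Fin m := ⟨0, by omega⟩
  let z₁ : Fin m := ⟨1, hm⟩
  have hz : z₀ ≠ z₁ := by simp [z₀, z₁, Fin.ext_iff]
  have ha2 : |a / 2| = 1 := by rw [abs_div, ha]; norm_num
  -- the sign `a / 2` is used twice, at `z₀` and at `z₁`, to keep the number of sign changes even
  let s : Fin m → ℝ := fun i => (if i = z₀ then a / 2 else 1) * (if i = z₁ then a / 2 else 1)
  have hs : ∀ i, |s i| = 1 := fun i => by
    simp only [s, abs_mul]
    split_ifs <;> simp [ha2]
  refine ⟨Equiv.swap i₀ z₀, 1, s, 1,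
    ⟨fun i => eq_or_eq_neg_of_abs_eq (hs i), fun _ => Or.inl rfl, ?_⟩, ?_⟩
  · simp only [s, Finset.prod_mul_distrib, Finset.prod_ite_eq', Finset.mem_univ, if_true]
    exact mul_self_eq_one_of_abs_eq_one ha2
  have hsz : a * s z₀ = 2 := by
    simp only [s, if_neg hz, mul_one, if_true]
    rw [← mul_div_assoc, ← abs_mul_abs_self, ha]
    norm_num
  rw [image_act_nonnegRoots (t := 1) hs (fun _ => abs_one), P1_eq (by omega), ← actₗ_apply,
    map_smul, actₗ_ε,    Equiv.swap_apply_left, smul_smul, hsz, nonnegRoots_smul two_pos]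

lemma dotProduct_lt_zero_of_nonnegRoots_eq {w w' : V m n} (h : nonnegRoots w = nonnegRoots w')
    {v : V m n} (hv : v ∈ Δroot m n) (hwv : w ⬝ᵥ v < 0) : w' ⬝ᵥ v < 0 := by
  by_contra h'
  have hv' : v ∈ nonnegRoots w := h ▸ ⟨hv, not_lt.1 h'⟩
  exact not_le.2 hwv hv'.2

lemma eq_of_nonnegRoots_eq (k₀ : Fin n) {w w' : V m n} (hw : ∀ p, |w p| = 1)
    (hw' : ∀ p, |w' p| = 1) (h : nonnegRoots w = nonnegRoots w') : w = w' := by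
  have hδ : ∀ k, w (Sum.inr k) = w' (Sum.inr k) := by
    intro k
    have hv := dotProduct_lt_zero_of_nonnegRoots_eq h
      (smul_δ_mem k (a := -2 * w (Sum.inr k)) (by simp [abs_mul, hw]))
      (by simp [mul_assoc, mul_self_eq_one_of_abs_eq_one (hw _)])
    simp only [dotProduct_smul, dotProduct_δ, smul_eq_mul] at hv
    exact eq_of_abs_eq_one_of_neg_one_lt_mul (hw _) (hw' _) (by linarith)
  ext (i | k)
  · have hv := dotProduct_lt_zero_of_nonnegRoots_eq h
      (smul_ε_add_smul_δ_mem i k₀ (a := -w (Sum.inl i)) (b := -w (Sum.inr k₀))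
        (by simp [hw]) (by simp [hw]))
      (by simp [mul_self_eq_one_of_abs_eq_one (hw _)])
    simp only [dotProduct_add, dotProduct_smul, dotProduct_ε, dotProduct_δ, smul_eq_mul,
      ← hδ k₀, neg_mul, mul_self_eq_one_of_abs_eq_one (hw (Sum.inr k₀))] at hv
    exact eq_of_abs_eq_one_of_neg_one_lt_mul (hw _) (hw' _) (by linarith)
  · exact hδ k

lemma apply_inr_eq_zero_of_nonnegRoots_eq {w w' : V m n} (h : nonnegRoots w = nonnegRoots w')
    {k : Fin n} (hk : w (Sum.inr k) = 0) : w' (Sum.inr k) = 0 := by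
  have h₁ : (2 : ℝ) • δ k ∈ nonnegRoots w' := h ▸ ⟨two_smul_δ_mem k, by simp [hk]⟩
  have h₂ : (-2 : ℝ) • δ k ∈ nonnegRoots w' := h ▸ ⟨smul_δ_mem k (by norm_num), by simp [hk]⟩
  have := h₁.2
  have := h₂.2
  simp only [dotProduct_smul, dotProduct_δ, smul_eq_mul] at *
  linarith

lemma not_exists_InW_image_Pm_eq_P1 (hm : 0 < m) (k₀ : Fin n) :
    ¬ ∃ σ τ s t, InW σ τ s t ∧ act σ τ s t '' Pm m n = P1 m n := by
  rintro ⟨σ, τ, s, t, hW, h⟩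
  rw [Pm_eq, P1_eq hm, image_act_nonnegRoots hW.abs_left hW.abs_right] at h
  have h₀ := apply_inr_eq_zero_of_nonnegRoots_eq h.symm (k := k₀) (by simp [ε])
  simp only [act, Sum.elim_inr, Pi.one_apply, mul_one] at h₀
  simpa [h₀] using hW.abs_right k₀

lemma not_exists_InW_image_P1_eq_Pmbar (hm : 0 < m) (k₀ : Fin n) :
    ¬ ∃ σ τ s t, InW σ τ s t ∧ act σ τ s t '' P1 m n = Pmbar m n := by
  rintro ⟨σ, τ, s, t, hW, h⟩
  rw [P1_eq hm, Pmbar_eq, Pm_eq, image_act_nonnegRoots hW.abs_left hW.abs_right,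
    image_act_nonnegRoots (t := 1) abs_θsign fun _ => abs_one] at h
  have h₀ := apply_inr_eq_zero_of_nonnegRoots_eq h (k := k₀) (by simp [act, ε])
  simp [act] at h₀

lemma not_exists_InW_image_Pm_eq_Pmbar (hm : 0 < m) (k₀ : Fin n) :
    ¬ ∃ σ τ s t, InW σ τ s t ∧ act σ τ s t '' Pm m n = Pmbar m n := by
  rintro ⟨σ, τ, s, t, hW, h⟩
  rw [Pmbar_eq, Pm_eq, image_act_nonnegRoots hW.abs_left hW.abs_right,
    image_act_nonnegRoots (t := 1) abs_θsign fun _ => abs_one] at h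
  have heq := eq_of_nonnegRoots_eq k₀ ?_ ?_ h
  · have hs : s = θsign m := funext fun i => by
      simpa [actₗ_apply, act, Equiv.Perm.one_def] using congrFun heq (Sum.inl i)
    have := hW.2.2
    rw [hs, prod_θsign hm] at this
    norm_num at this
  · rintro (i | k) <;> simp [act, hW.abs_left, hW.abs_right]
  · rintro (i | k) <;> simp [act, abs_θsign]

end OspEven

theorem stmt_7_general (m n : ℕ) (hm : 2 ≤ m) (hn : 1 ≤ n)
    (P : Set (OspEven.V m n)) :
    (IsCominuscule (OspEven.Δroot m n) P ↔
      ∃ (σ : Equiv.Perm (Fin m)) (τ : Equiv.Perm (Fin n)) (s : Fin m → ℝ) (t : Fin n → ℝ),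
        OspEven.InW σ τ s t ∧
        (OspEven.act σ τ s t '' P = OspEven.Pm m n ∨
         OspEven.act σ τ s t '' P = OspEven.P1 m n ∨
         OspEven.act σ τ s t '' P = OspEven.Pmbar m n)) ∧
    (IsCominuscule (OspEven.Δroot m n) (OspEven.Pm m n) ∧
     IsCominuscule (OspEven.Δroot m n) (OspEven.P1 m n) ∧
     IsCominuscule (OspEven.Δroot m n) (OspEven.Pmbar m n)) ∧
    (¬ ∃ (σ : Equiv.Perm (Fin m)) (τ : Equiv.Perm (Fin n)) (s : Fin m → ℝ) (t : Fin n → ℝ),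
        OspEven.InW σ τ s t ∧ OspEven.act σ τ s t '' OspEven.Pm m n = OspEven.P1 m n) ∧
    (¬ ∃ (σ : Equiv.Perm (Fin m)) (τ : Equiv.Perm (Fin n)) (s : Fin m → ℝ) (t : Fin n → ℝ),
        OspEven.InW σ τ s t ∧ OspEven.act σ τ s t '' OspEven.Pm m n = OspEven.Pmbar m n) ∧
    (¬ ∃ (σ : Equiv.Perm (Fin m)) (τ : Equiv.Perm (Fin n)) (s : Fin m → ℝ) (t : Fin n → ℝ),
        OspEven.InW σ τ s t ∧ OspEven.act σ τ s t '' OspEven.P1 m n = OspEven.Pmbar m n) := by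
  have hm₀ : 0 < m := by omega
  let k₀ : Fin n := ⟨0, hn⟩
  have hPm := OspEven.isCominuscule_Pm (m := m) k₀
  have hP1 := OspEven.isCominuscule_P1 hm₀ k₀
  have hPmbar := OspEven.isCominuscule_Pmbar (m := m) k₀
  refine ⟨⟨fun hP => ?_, ?_⟩, ⟨hPm, hP1, hPmbar⟩, OspEven.not_exists_InW_image_Pm_eq_P1 hm₀ k₀,
    OspEven.not_exists_InW_image_Pm_eq_Pmbar hm₀ k₀,
    OspEven.not_exists_InW_image_P1_eq_Pmbar hm₀ k₀⟩
  · obtain ⟨w, hw₀, hw, rfl⟩ := OspEven.exists_eq_nonnegRoots_of_isCominuscule k₀ hP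
    rcases OspEven.abs_eq_one_or_eq_smul_ε_or_eq_zero k₀ hw with hw₁ | ⟨i, a, ha, rfl⟩ | rfl
    · obtain ⟨σ, τ, s, t, hW, h⟩ := OspEven.exists_InW_image_eq_Pm_or_Pmbar hm₀ hw₁
      exact ⟨σ, τ, s, t, hW, h.imp_right Or.inr⟩
    · obtain ⟨σ, τ, s, t, hW, h⟩ := OspEven.exists_InW_image_eq_P1 hm i ha
      exact ⟨σ, τ, s, t, hW, Or.inr (Or.inl h)⟩
    · exact absurd rfl hw₀
  · rintro ⟨σ, τ, s, t, hW, h⟩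
    rw [← OspEven.isCominuscule_image_act_iff hW.abs_left hW.abs_right]
    rcases h with h | h | h <;> rw [h]
    exacts [hPm, hP1, hPmbar]

theorem stmt_7 (m n : ℕ) (hm : 2 ≤ m) (hn : 1 ≤ n)
    (P : Set (OspEven.V m n)) (hP : P ⊆ OspEven.Δroot m n) :
    (IsCominuscule (OspEven.Δroot m n) P ↔
      ∃ (σ : Equiv.Perm (Fin m)) (τ : Equiv.Perm (Fin n)) (s : Fin m → ℝ) (t : Fin n → ℝ),
        OspEven.InW σ τ s t ∧
        (OspEven.act σ τ s t '' P = OspEven.Pm m n ∨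
         OspEven.act σ τ s t '' P = OspEven.P1 m n ∨
         OspEven.act σ τ s t '' P = OspEven.Pmbar m n)) ∧
    (IsCominuscule (OspEven.Δroot m n) (OspEven.Pm m n) ∧
     IsCominuscule (OspEven.Δroot m n) (OspEven.P1 m n) ∧
     IsCominuscule (OspEven.Δroot m n) (OspEven.Pmbar m n)) ∧
    (¬ ∃ (σ : Equiv.Perm (Fin m)) (τ : Equiv.Perm (Fin n)) (s : Fin m → ℝ) (t : Fin n → ℝ),
        OspEven.InW σ τ s t ∧ OspEven.act σ τ s t '' OspEven.Pm m n = OspEven.P1 m n) ∧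
    (¬ ∃ (σ : Equiv.Perm (Fin m)) (τ : Equiv.Perm (Fin n)) (s : Fin m → ℝ) (t : Fin n → ℝ),
        OspEven.InW σ τ s t ∧ OspEven.act σ τ s t '' OspEven.Pm m n = OspEven.Pmbar m n) ∧
    (¬ ∃ (σ : Equiv.Perm (Fin m)) (τ : Equiv.Perm (Fin n)) (s : Fin m → ℝ) (t : Fin n → ℝ),
        OspEven.InW σ τ s t ∧ OspEven.act σ τ s t '' OspEven.P1 m n = OspEven.Pmbar m n) :=
  stmt_7_general m n hm hn P
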